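/- arXiv:1902.11044 — 3 statements merged into one kernel-verified Lean document; each statement's English description precedes it below -/
import Mathlib

section
/- Let c = 1 / log₂(3p/(p-1)) for a real p > 1. Then for all nonnegative reals r, s with r + s ≤ (2(p-1)/(3p))·n, we have r^c + s^c ≤ n^c. -/
/-- Let `c = 1 / log₂(3p/(p-1))` for `p > 1`. Then for all nonnegative reals `r, s`
with `r + s ≤ (2(p-1)/(3p))·n`, we have `r^c + s^c ≤ n^c`. -/
theorem stmt_2 (p n r s : ℝ) (hp : 1 < p) (hn : 0 < n) (hr : 0 ≤ r) (hs : 0 ≤ s)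
    (hrs : r + s ≤ 2 * (p - 1) / (3 * p) * n) :
    r ^ (1 / Real.logb 2 (3 * p / (p - 1))) + s ^ (1 / Real.logb 2 (3 * p / (p - 1)))
      ≤ n ^ (1 / Real.logb 2 (3 * p / (p - 1))) := by
  set K : ℝ := 3 * p / (p - 1) with hK
  have hp1 : (0:ℝ) < p - 1 := by linarith
  have hK3 : (3:ℝ) < K := by
    rw [hK, lt_div_iff₀ hp1]; nlinarith
  have hK0 : (0:ℝ) < K := by linarith
  set c : ℝ := 1 / Real.logb 2 K with hc
  have hlog1 : (1:ℝ) ≤ Real.logb 2 K := by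
    have := Real.logb_le_logb_of_le (b := 2) (by norm_num) (by norm_num) (by linarith : (2:ℝ) ≤ K)
    simpa using this
  have hc0 : 0 < c := by
    rw [hc]; positivity
  have hc1 : c ≤ 1 := by
    rw [hc, div_le_one (by linarith)]; exact hlog1
  -- K ^ c = 2
  have hKc : K ^ c = 2 := by
    have h1 : c = Real.logb K 2 := by
      rw [hc]; simp only [Real.logb]; rw [one_div_div]
    rw [h1, Real.rpow_logb hK0 (by norm_num; linarith) (by norm_num)]
  -- concavity: (r^c + s^c)/2 ≤ ((r+s)/2)^c
  have hconc := (Real.concaveOn_rpow hc0.le hc1).2 (Set.mem_Ici.mpr hr)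
    (Set.mem_Ici.mpr hs) (by norm_num : (0:ℝ) ≤ 1/2) (by norm_num : (0:ℝ) ≤ 1/2)
    (by norm_num)
  simp only [smul_eq_mul] at hconc
  -- (r+s)/2 ≤ n / K
  have hmid : 1/2 * r + 1/2 * s ≤ n / K := by
    have h2 : 2 * (p - 1) / (3 * p) * n = 2 * (n / K) := by
      rw [hK]; field_simp
    rw [h2] at hrs; linarith
  have hmono : (1/2 * r + 1/2 * s) ^ c ≤ (n / K) ^ c :=
    Real.rpow_le_rpow (by positivity) hmid hc0.le
  have hdiv : (n / K) ^ c = n ^ c / 2 := by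
    rw [Real.div_rpow hn.le hK0.le, hKc]
  nlinarith [hconc, hmono, hdiv]
end

section
/- Let p = 9.956 and c = 1/log₂(3p/(p-1)). Then 2·(1/p)^c + ((1 - 2/p)/3)^c ≤ 1. -/
private lemma rpow_upper {x u : ℝ} (a b : ℕ) (hb : 0 < b) (hx : 0 ≤ x)
    (hu : 0 ≤ u) (h : x ^ a ≤ u ^ b) : x ^ ((a : ℝ) / b) ≤ u := by
  have hb' : (0:ℝ) < b := by exact_mod_cast hb
  have h1 : (x ^ a : ℝ) ^ ((1:ℝ)/b) ≤ (u ^ b : ℝ) ^ ((1:ℝ)/b) :=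
    Real.rpow_le_rpow (pow_nonneg hx a) h (by positivity)
  calc x ^ ((a : ℝ) / b) = (x ^ a : ℝ) ^ ((1:ℝ)/b) := by
        rw [← Real.rpow_natCast x a, ← Real.rpow_mul hx]
        ring_nf
    _ ≤ (u ^ b : ℝ) ^ ((1:ℝ)/b) := h1
    _ = u := by
        rw [← Real.rpow_natCast u b, ← Real.rpow_mul hu, mul_one_div,
          div_self (ne_of_gt hb'), Real.rpow_one]

private lemma rpow_lower {x u : ℝ} (a b : ℕ) (hb : 0 < b) (hx : 0 ≤ x)
    (hu : 0 ≤ u) (h : u ^ b ≤ x ^ a) : u ≤ x ^ ((a : ℝ) / b) := by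
  have hb' : (0:ℝ) < b := by exact_mod_cast hb
  have h1 : (u ^ b : ℝ) ^ ((1:ℝ)/b) ≤ (x ^ a : ℝ) ^ ((1:ℝ)/b) :=
    Real.rpow_le_rpow (pow_nonneg hu b) h (by positivity)
  calc u = (u ^ b : ℝ) ^ ((1:ℝ)/b) := by
        rw [← Real.rpow_natCast u b, ← Real.rpow_mul hu, mul_one_div,
          div_self (ne_of_gt hb'), Real.rpow_one]
    _ ≤ (x ^ a : ℝ) ^ ((1:ℝ)/b) := h1
    _ = x ^ ((a : ℝ) / b) := by
        rw [← Real.rpow_natCast x a, ← Real.rpow_mul hx]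
        ring_nf

/-- Let `p = 9.956` and `c = 1/log₂(3p/(p-1))`. Then
`2·(1/p)^c + ((1 - 2/p)/3)^c ≤ 1`. -/
theorem stmt_6 :
    let p : ℝ := 9.956
    let c : ℝ := 1 / Real.logb 2 (3 * p / (p - 1))
    2 * (1 / p) ^ c + ((1 - 2 / p) / 3) ^ c ≤ 1 := by
  intro p c
  have hp : p = 9.956 := rfl
  have hB : 3 * p / (p - 1) = 7467 / 2239 := by rw [hp]; norm_num
  have hL : Real.logb 2 (7467 / 2239) ≤ 106 / 61 := by
    rw [Real.logb_le_iff_le_rpow (by norm_num) (by norm_num)]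
    have : ((106 : ℝ) : ℝ) / ((61 : ℕ) : ℝ) = (106:ℝ)/61 := by norm_num
    have h2 : ((7467:ℝ)/2239) ≤ (2:ℝ) ^ (((106:ℕ) : ℝ) / ((61:ℕ) : ℝ)) := by
      apply rpow_lower 106 61 (by norm_num) (by norm_num) (by norm_num)
      norm_num
    calc ((7467:ℝ)/2239) ≤ (2:ℝ) ^ (((106:ℕ) : ℝ) / ((61:ℕ) : ℝ)) := h2
      _ = (2:ℝ) ^ ((106:ℝ)/61) := by norm_num
  have hLpos : 0 < Real.logb 2 (7467 / 2239) := by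
    apply Real.logb_pos (by norm_num) (by norm_num)
  have hc : c = 1 / Real.logb 2 (7467 / 2239) := by
    show 1 / Real.logb 2 (3 * p / (p - 1)) = _
    rw [hB]
  have hcge : (61:ℝ)/106 ≤ c := by
    rw [hc]
    have := one_div_le_one_div_of_le hLpos hL
    calc (61:ℝ)/106 = 1 / ((106:ℝ)/61) := by norm_num
      _ ≤ 1 / Real.logb 2 (7467 / 2239) := this
  have hx1 : (1 : ℝ) / p = 250 / 2489 := by rw [hp]; norm_num
  have hx2 : (1 - 2 / p) / 3 = 663 / 2489 := by rw [hp]; norm_num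
  rw [hx1, hx2]
  have h1 : ((250:ℝ)/2489) ^ c ≤ ((250:ℝ)/2489) ^ ((61:ℝ)/106) :=
    Real.rpow_le_rpow_of_exponent_ge (by norm_num) (by norm_num) hcge
  have h2 : ((663:ℝ)/2489) ^ c ≤ ((663:ℝ)/2489) ^ ((61:ℝ)/106) :=
    Real.rpow_le_rpow_of_exponent_ge (by norm_num) (by norm_num) hcge
  have h3 : ((250:ℝ)/2489) ^ (((61:ℕ):ℝ)/((106:ℕ):ℝ)) ≤ 2664591/10000000 := by
    apply rpow_upper 61 106 (by norm_num) (by norm_num) (by norm_num)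
    norm_num
  have h4 : ((663:ℝ)/2489) ^ (((61:ℕ):ℝ)/((106:ℕ):ℝ)) ≤ 4670733/10000000 := by
    apply rpow_upper 61 106 (by norm_num) (by norm_num) (by norm_num)
    norm_num
  have e1 : (((61:ℕ):ℝ)/((106:ℕ):ℝ)) = (61:ℝ)/106 := by norm_num
  rw [e1] at h3 h4
  linarith
end

section
/- Let ω, η : ℕ → ℕ satisfy ω(1)=η(1)=1, ω(2)=3, η(2)=2, and for h ≥ 3: ω(h) = max{2η(h−1)+1, ω(h−2)+2η(h−2)} and η(h) = ω(h−1) + max{ω(h−2), (ω(h−2)+1)/2 + η(h−2)} (with the division rounded up). Then there exists k > 0 such that ω(h) ≤ k·(1.8794)^h and η(h) ≤ 0.9397·k·(1.8794)^h for all h ≥ 1. -/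
/-- Let `ω, η : ℕ → ℕ` satisfy `ω(1)=η(1)=1`, `ω(2)=3`, `η(2)=2`, and for `h ≥ 3`:
`ω(h) = max{2η(h−1)+1, ω(h−2)+2η(h−2)}` and
`η(h) = ω(h−1) + max{ω(h−2), ⌈(ω(h−2)+1)/2⌉ + η(h−2)}`. Then there exists `k > 0`
with `ω(h) ≤ k·1.8794^h` and `η(h) ≤ 0.9397·k·1.8794^h` for all `h ≥ 1`. -/
theorem stmt_15 (ω η : ℕ → ℕ) (hω1 : ω 1 = 1) (hη1 : η 1 = 1) (hω2 : ω 2 = 3)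
    (hη2 : η 2 = 2)
    (hω : ∀ h, 3 ≤ h → ω h = max (2 * η (h - 1) + 1) (ω (h - 2) + 2 * η (h - 2)))
    (hη : ∀ h, 3 ≤ h →
      η h = ω (h - 1) + max (ω (h - 2)) ((ω (h - 2) + 1 + 1) / 2 + η (h - 2))) :
    ∃ k : ℝ, 0 < k ∧ ∀ h, 1 ≤ h →
      (ω h : ℝ) ≤ k * 1.8794 ^ h ∧ (η h : ℝ) ≤ 0.9397 * k * 1.8794 ^ h := by
  refine ⟨20000, by norm_num, ?_⟩
  have key : ∀ h, 1 ≤ h → (ω h : ℝ) ≤ 20000 * 1.8794 ^ h ∧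
      (η h : ℝ) ≤ 0.9397 * 20000 * 1.8794 ^ h - 1 := by
    intro h
    induction h using Nat.strong_induction_on with
    | _ h ih =>
      intro hh
      match h, hh with
      | 1, _ => constructor <;> simp [hω1, hη1] <;> norm_num
      | 2, _ => constructor <;> simp [hω2, hη2] <;> norm_num
      | (n+3), _ =>
        obtain ⟨hw2, he2⟩ := ih (n+2) (by omega) (by omega)
        obtain ⟨hw1, he1⟩ := ih (n+1) (by omega) (by omega)
        have eω := hω (n+3) (by omega)
        have eη := hη (n+3) (by omega)
        have e1 : n + 3 - 1 = n + 2 := rfl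
        have e2 : n + 3 - 2 = n + 1 := rfl
        rw [e1, e2] at eω eη
        have hP : (1.8794:ℝ) ^ 1 ≤ 1.8794 ^ (n+1) :=
          pow_le_pow_right₀ (by norm_num) (by omega)
        rw [pow_one] at hP
        have hPpos : (0:ℝ) < 1.8794 ^ (n+1) := by positivity
        have p2 : (1.8794:ℝ) ^ (n+2) = 1.8794 ^ (n+1) * 1.8794 := by ring
        have p3 : (1.8794:ℝ) ^ (n+3) = 1.8794 ^ (n+1) * 3.53214436 := by
          rw [show n+3 = (n+1)+2 from rfl, pow_add]; norm_num
        have hceil : ((ω (n+1) + 1 + 1) / 2 : ℕ) ≤ ((ω (n+1) : ℝ) + 2) / 2 := by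
          calc (((ω (n+1) + 1 + 1) / 2 : ℕ) : ℝ) ≤ ((ω (n+1) + 1 + 1 : ℕ) : ℝ) / ((2:ℕ):ℝ) :=
                Nat.cast_div_le
            _ = ((ω (n+1) : ℝ) + 2) / 2 := by push_cast; ring
        rw [p2] at hw2 he2
        constructor
        · rw [eω]
          push_cast [Nat.cast_max]
          apply max_le
          · rw [p3]; nlinarith [he2, hPpos]
          · rw [p3]; linarith [hw1, he1, hPpos, mul_nonneg (by norm_num : (0:ℝ) ≤ 20000) hPpos.le]
        · rw [eη]
          push_cast [Nat.cast_max]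
          have hmax : max ((ω (n+1) : ℝ)) (((ω (n+1) + 1 + 1) / 2 : ℕ) + (η (n+1) : ℝ))
              ≤ 1.4397 * (20000 * 1.8794 ^ (n+1)) := by
            apply max_le
            · nlinarith [hw1, hPpos]
            · nlinarith [hceil, hw1, he1, hPpos]
          rw [p3]
          linarith [hw2, hmax, hP]
  intro h hh
  obtain ⟨h1, h2⟩ := key h hh
  exact ⟨h1, by linarith⟩
end
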